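/- (Mutual-information subadditivity under sums, Equation (12) of the paper) Let A and B be random variables taking finitely many real values and let C be a finite-valued random variable. If A ⊥ B and A ⊥ B | C, then I(A + B; C) ≤ I(A; C) + I(B; C). -/

import Mathlib

open MeasureTheory

namespace MarginalTransfer

variable {Ω : Type*} [MeasurableSpace Ω]

/-- `P(A) := μ(A)`, as a real number. -/
noncomputable def pr (μ : Measure Ω) (A : Set Ω) : ℝ := (μ A).toReal

/-- Conditional mutual information
`I(U;V|W) := Σ_{u,v,w} P(U=u, V=v, W=w) ·
  log( (P(U=u, V=v, W=w) · P(W=w)) / (P(U=u, W=w) · P(V=v, W=w)) )`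
for finitely-valued random variables; any summand whose leading factor
`P(U=u, V=v, W=w)` is zero vanishes. -/
noncomputable def condMI {α β γ : Type*} (μ : Measure Ω)
    (U : Ω → α) (V : Ω → β) (W : Ω → γ) : ℝ :=
  ∑' u : α, ∑' v : β, ∑' w : γ,
    pr μ {ω | U ω = u ∧ V ω = v ∧ W ω = w} *
      Real.log (pr μ {ω | U ω = u ∧ V ω = v ∧ W ω = w} * pr μ {ω | W ω = w} /
        (pr μ {ω | U ω = u ∧ W ω = w} * pr μ {ω | V ω = v ∧ W ω = w}))

/-- Unconditional mutual information `I(U;V)`: the same formula with `W` a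
constant random variable. -/
noncomputable def mutualInfo {α β : Type*} (μ : Measure Ω)
    (U : Ω → α) (V : Ω → β) : ℝ :=
  condMI μ U V (fun _ => (() : Unit))

/-- Conditional independence `U ⟂ V ∣ W`:
`P(U=u, V=v, W=w) · P(W=w) = P(U=u, W=w) · P(V=v, W=w)` for all `u, v, w`. -/
def CondIndep {α β γ : Type*} (μ : Measure Ω)
    (U : Ω → α) (V : Ω → β) (W : Ω → γ) : Prop :=
  ∀ u v w,
    pr μ {ω | U ω = u ∧ V ω = v ∧ W ω = w} * pr μ {ω | W ω = w} =
      pr μ {ω | U ω = u ∧ W ω = w} * pr μ {ω | V ω = v ∧ W ω = w}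

/-- Unconditional independence `U ⟂ V`: conditional independence given a
constant random variable. -/
def Indep {α β : Type*} (μ : Measure Ω) (U : Ω → α) (V : Ω → β) : Prop :=
  CondIndep μ U V (fun _ => (() : Unit))

/-- Shannon entropy `H(U) := −Σ_u P(U=u) · log P(U=u)`. -/
noncomputable def entropy {α : Type*} (μ : Measure Ω) (U : Ω → α) : ℝ :=
  -∑' u : α, pr μ {ω | U ω = u} * Real.log (pr μ {ω | U ω = u})

/-- Conditional Shannon entropy
`H(U|V) := −Σ_{u,v} P(U=u, V=v) · log( P(U=u, V=v) / P(V=v) )`. -/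
noncomputable def condEntropy {α β : Type*} (μ : Measure Ω)
    (U : Ω → α) (V : Ω → β) : ℝ :=
  -∑' u : α, ∑' v : β,
    pr μ {ω | U ω = u ∧ V ω = v} *
      Real.log (pr μ {ω | U ω = u ∧ V ω = v} / pr μ {ω | V ω = v})

end MarginalTransfer

open MarginalTransfer

/-!
Write `I(U;C)` as the finite sum of the terms `p(u,c) log (p(u,c) / (p(u) p(c)))`. By the
log-sum inequality, merging the values of `U` along a map `f` can only decrease this sum (data
processing), so `I(A+B;C) ≤ I((A,B);C)`. The two independence hypotheses factor
`p(a,b,c) / (p(a,b) p(c))` as `p(a,c) / (p(a) p(c)) · p(b,c) / (p(b) p(c))`, which splits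
`I((A,B);C)` into `I(A;C) + I(B;C)`.
-/

namespace MarginalTransfer

open Real Finset

variable {Ω α β γ : Type*} [MeasurableSpace Ω] {μ : Measure Ω}

theorem sub_mul_le_mul_log_div_sub {x y t : ℝ} (hx : 0 ≤ x) (hy : 0 ≤ y)
    (hxy : y = 0 → x = 0) (ht : 0 < t) :
    x - y * t ≤ x * log (x / y) - x * log t := by
  rcases hx.eq_or_lt with rfl | hx
  · simpa using mul_nonneg hy ht.le
  have hy : 0 < y := hy.lt_of_ne' fun h => hx.ne' (hxy h)
  have key := self_sub_one_le_mul_log (div_nonneg hx.le (mul_pos hy ht).le)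
  rw [← div_div, log_div (div_pos hx hy).ne' ht.ne'] at key
  calc x - y * t = (x / y / t - 1) * (y * t) := by field_simp
    _ ≤ x / y / t * (log (x / y) - log t) * (y * t) := by gcongr
    _ = x * log (x / y) - x * log t := by field_simp

theorem sum_mul_log_sum_div_sum_le {ι : Type*} (s : Finset ι) (x y : ι → ℝ)
    (hx : ∀ i ∈ s, 0 ≤ x i) (hy : ∀ i ∈ s, 0 ≤ y i) (hxy : ∀ i ∈ s, y i = 0 → x i = 0) :
    (∑ i ∈ s, x i) * log ((∑ i ∈ s, x i) / ∑ i ∈ s, y i) ≤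
      ∑ i ∈ s, x i * log (x i / y i) := by
  by_cases hX : ∑ i ∈ s, x i = 0
  · have hx0 := (sum_eq_zero_iff_of_nonneg hx).1 hX
    rw [hX, zero_mul, sum_eq_zero fun i hi => by rw [hx0 i hi, zero_mul]]
  have hX : 0 < ∑ i ∈ s, x i := (sum_nonneg hx).lt_of_ne' hX
  have hY : 0 < ∑ i ∈ s, y i := by
    refine (sum_nonneg hy).lt_of_ne' fun hY => hX.ne' (sum_eq_zero fun i hi => ?_)
    exact hxy i hi ((sum_eq_zero_iff_of_nonneg hy).1 hY i hi)
  have key := sum_le_sum fun i hi =>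
    sub_mul_le_mul_log_div_sub (hx i hi) (hy i hi) (hxy i hi) (div_pos hX hY)
  rw [sum_sub_distrib, sum_sub_distrib, ← sum_mul, ← sum_mul, mul_div_cancel₀ _ hY.ne'] at key
  linarith

lemma pr_nonneg (μ : Measure Ω) (s : Set Ω) : 0 ≤ pr μ s := ENNReal.toReal_nonneg

lemma pr_mono [IsFiniteMeasure μ] {s t : Set Ω} (h : s ⊆ t) : pr μ s ≤ pr μ t :=
  ENNReal.toReal_mono (measure_ne_top μ t) (measure_mono h)

lemma pr_eq_sum_pr_and [IsFiniteMeasure μ] [MeasurableSpace α] [MeasurableSingletonClass α]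
    {U : Ω → α} (hU : Measurable U) {S : Finset α} (hS : ∀ ω, U ω ∈ S) (P : Ω → Prop) :
    pr μ {ω | P ω} = ∑ u ∈ S, pr μ {ω | U ω = u ∧ P ω} := by
  have hfib : ∀ u ∈ S, MeasurableSet (U ⁻¹' {u}) := fun u _ => hU (measurableSet_singleton u)
  have hcover : U ⁻¹' ↑S = Set.univ := Set.eq_univ_of_forall hS
  simp only [pr]
  rw [← ENNReal.toReal_sum fun u _ => measure_ne_top _ _]
  congr 1
  have := sum_measure_preimage_singleton (μ := μ.restrict {ω | P ω}) S hfib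
  rw [hcover, Measure.restrict_apply_univ] at this
  rw [← this]
  refine sum_congr rfl fun u hu => ?_
  rw [Measure.restrict_apply (hfib u hu)]
  rfl

lemma pr_comp_and_eq_sum [IsFiniteMeasure μ] [MeasurableSpace α] [MeasurableSingletonClass α]
    [DecidableEq β] {U : Ω → α} (hU : Measurable U) {S : Finset α} (hS : ∀ ω, U ω ∈ S)
    (f : α → β) (b : β) (P : Ω → Prop) :
    pr μ {ω | f (U ω) = b ∧ P ω} = ∑ u ∈ S with f u = b, pr μ {ω | U ω = u ∧ P ω} := by
  rw [pr_eq_sum_pr_and hU hS, sum_filter]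
  refine sum_congr rfl fun u _ => ?_
  split_ifs with hu
  · congr 1
    ext ω
    exact ⟨fun h => ⟨h.1, h.2.2⟩, by rintro ⟨rfl, h⟩; exact ⟨rfl, hu, h⟩⟩
  · have hempty : {ω | U ω = u ∧ f (U ω) = b ∧ P ω} = ∅ :=
      Set.eq_empty_of_forall_notMem fun ω h => hu (h.1 ▸ h.2.1)
    simp [hempty, pr]

lemma Indep.pr_and_eq_mul [IsProbabilityMeasure μ] {A : Ω → α} {B : Ω → β} (h : Indep μ A B)
    (a : α) (b : β) :
    pr μ {ω | A ω = a ∧ B ω = b} = pr μ {ω | A ω = a} * pr μ {ω | B ω = b} := by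
  simpa [pr] using h a b ()

noncomputable def mutualInfoTerm (μ : Measure Ω) (U : Ω → α) (C : Ω → γ) (u : α) (c : γ) : ℝ :=
  pr μ {ω | U ω = u ∧ C ω = c} *
    log (pr μ {ω | U ω = u ∧ C ω = c} / (pr μ {ω | U ω = u} * pr μ {ω | C ω = c}))

lemma mutualInfo_eq_sum [IsProbabilityMeasure μ] [Fintype γ] {U : Ω → α} {S : Finset α}
    (hS : ∀ ω, U ω ∈ S) (C : Ω → γ) :
    mutualInfo μ U C = ∑ u ∈ S, ∑ c, mutualInfoTerm μ U C u c := by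
  rw [mutualInfo, condMI, tsum_eq_sum (s := S)]
  · simp [tsum_fintype, mutualInfoTerm, pr]
  · intro u hu
    have hempty : ∀ c, {ω | U ω = u ∧ C ω = c} = ∅ := fun c =>
      Set.eq_empty_of_forall_notMem fun ω h => hu (h.1 ▸ hS ω)
    simp [hempty, pr]

lemma mutualInfoTerm_comp_le [IsFiniteMeasure μ] [MeasurableSpace α]
    [MeasurableSingletonClass α] [DecidableEq β] {U : Ω → α} (hU : Measurable U) {S : Finset α}
    (hS : ∀ ω, U ω ∈ S) (f : α → β) (C : Ω → γ) (b : β) (c : γ) :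
    mutualInfoTerm μ (f ∘ U) C b c ≤ ∑ u ∈ S with f u = b, mutualInfoTerm μ U C u c := by
  have hjoint := pr_comp_and_eq_sum (μ := μ) hU hS f b (fun ω => C ω = c)
  have hmarg : pr μ {ω | f (U ω) = b} = ∑ u ∈ S with f u = b, pr μ {ω | U ω = u} := by
    simpa using pr_comp_and_eq_sum (μ := μ) hU hS f b (fun _ => True)
  have hac : ∀ u, pr μ {ω | U ω = u} * pr μ {ω | C ω = c} = 0 →
      pr μ {ω | U ω = u ∧ C ω = c} = 0 := by
    intro u h
    rcases mul_eq_zero.1 h with h | h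
    exacts [le_antisymm (h ▸ pr_mono fun ω hω => hω.1) (pr_nonneg _ _),
      le_antisymm (h ▸ pr_mono fun ω hω => hω.2) (pr_nonneg _ _)]
  have := sum_mul_log_sum_div_sum_le {u ∈ S | f u = b}
    (fun u => pr μ {ω | U ω = u ∧ C ω = c}) (fun u => pr μ {ω | U ω = u} * pr μ {ω | C ω = c})
    (fun _ _ => pr_nonneg _ _) (fun _ _ => mul_nonneg (pr_nonneg _ _) (pr_nonneg _ _))
    (fun u _ => hac u)
  rwa [← sum_mul, ← hjoint, ← hmarg] at this

theorem mutualInfo_comp_le [IsProbabilityMeasure μ] [Fintype γ] [MeasurableSpace α]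
    [MeasurableSingletonClass α] {U : Ω → α} (hU : Measurable U) (hUfin : (Set.range U).Finite)
    (f : α → β) (C : Ω → γ) :
    mutualInfo μ (f ∘ U) C ≤ mutualInfo μ U C := by
  classical
  set S := hUfin.toFinset
  have hS : ∀ ω, U ω ∈ S := fun ω => hUfin.mem_toFinset.2 ⟨ω, rfl⟩
  rw [mutualInfo_eq_sum (U := f ∘ U) (S := S.image f) fun ω => mem_image_of_mem f (hS ω),
    mutualInfo_eq_sum hS, ← sum_fiberwise_of_maps_to fun u hu => mem_image_of_mem f hu]
  refine sum_le_sum fun b _ => ?_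
  rw [sum_comm]
  exact sum_le_sum fun c _ => mutualInfoTerm_comp_le hU hS f C b c

lemma mutualInfoTerm_prod_eq [IsProbabilityMeasure μ] {A : Ω → α} {B : Ω → β} {C : Ω → γ}
    (hAB : Indep μ A B) (hABC : CondIndep μ A B C) (a : α) (b : β) (c : γ) :
    mutualInfoTerm μ (fun ω => (A ω, B ω)) C (a, b) c =
      pr μ {ω | A ω = a ∧ B ω = b ∧ C ω = c} *
        (log (pr μ {ω | A ω = a ∧ C ω = c} / (pr μ {ω | A ω = a} * pr μ {ω | C ω = c})) +
          log (pr μ {ω | B ω = b ∧ C ω = c} / (pr μ {ω | B ω = b} * pr μ {ω | C ω = c}))) := by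
  have hjoint : {ω | (A ω, B ω) = (a, b) ∧ C ω = c} = {ω | A ω = a ∧ B ω = b ∧ C ω = c} := by
    ext; simp [and_assoc]
  have hpair : {ω | (A ω, B ω) = (a, b)} = {ω | A ω = a ∧ B ω = b} := by
    ext; simp
  rw [mutualInfoTerm, hjoint, hpair, hAB.pr_and_eq_mul]
  obtain hp | hp := (pr_nonneg μ {ω | A ω = a ∧ B ω = b ∧ C ω = c}).eq_or_lt
  · simp [← hp]
  have hac : 0 < pr μ {ω | A ω = a ∧ C ω = c} := hp.trans_le (pr_mono fun ω h => ⟨h.1, h.2.2⟩)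
  have hbc : 0 < pr μ {ω | B ω = b ∧ C ω = c} := hp.trans_le (pr_mono fun ω h => h.2)
  have hc : 0 < pr μ {ω | C ω = c} := hp.trans_le (pr_mono fun ω h => h.2.2)
  have ha : 0 < pr μ {ω | A ω = a} := hac.trans_le (pr_mono fun ω h => h.1)
  have hb : 0 < pr μ {ω | B ω = b} := hbc.trans_le (pr_mono fun ω h => h.1)
  rw [← log_mul (by positivity) (by positivity)]
  congr 2
  field_simp
  linear_combination hABC a b c

theorem mutualInfo_prod_eq_add [IsProbabilityMeasure μ] [Fintype γ] [MeasurableSpace α]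
    [MeasurableSingletonClass α] [MeasurableSpace β] [MeasurableSingletonClass β]
    {A : Ω → α} {B : Ω → β} (hA : Measurable A) (hB : Measurable B)
    (hAfin : (Set.range A).Finite) (hBfin : (Set.range B).Finite) {C : Ω → γ}
    (hAB : Indep μ A B) (hABC : CondIndep μ A B C) :
    mutualInfo μ (fun ω => (A ω, B ω)) C = mutualInfo μ A C + mutualInfo μ B C := by
  set SA := hAfin.toFinset
  set SB := hBfin.toFinset
  have hSA : ∀ ω, A ω ∈ SA := fun ω => hAfin.mem_toFinset.2 ⟨ω, rfl⟩
  have hSB : ∀ ω, B ω ∈ SB := fun ω => hBfin.mem_toFinset.2 ⟨ω, rfl⟩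
  have hmargA : ∀ a c, pr μ {ω | A ω = a ∧ C ω = c} =
      ∑ b ∈ SB, pr μ {ω | A ω = a ∧ B ω = b ∧ C ω = c} := by
    intro a c
    rw [pr_eq_sum_pr_and hB hSB]
    simp only [and_left_comm]
  have hmargB : ∀ b c, pr μ {ω | B ω = b ∧ C ω = c} =
      ∑ a ∈ SA, pr μ {ω | A ω = a ∧ B ω = b ∧ C ω = c} :=
    fun b c => pr_eq_sum_pr_and hA hSA _
  rw [mutualInfo_eq_sum (S := SA ×ˢ SB) fun ω => mem_product.2 ⟨hSA ω, hSB ω⟩,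
    mutualInfo_eq_sum hSA, mutualInfo_eq_sum hSB, sum_product]
  simp only [mutualInfoTerm_prod_eq hAB hABC, mul_add, sum_add_distrib]
  congr 1
  · refine sum_congr rfl fun a _ => ?_
    rw [sum_comm]
    refine sum_congr rfl fun c _ => ?_
    rw [← sum_mul, ← hmargA]
    rfl
  · rw [sum_comm]
    refine sum_congr rfl fun b _ => ?_
    rw [sum_comm]
    refine sum_congr rfl fun c _ => ?_
    rw [← sum_mul, ← hmargB]
    rfl

end MarginalTransfer

theorem mi_subadditivity_under_sums_general
    {Ω : Type*} [MeasurableSpace Ω] (μ : Measure Ω) [IsProbabilityMeasure μ]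
    {𝒞 : Type*} [Fintype 𝒞]
    (A B : Ω → ℝ) (C : Ω → 𝒞)
    (hA : Measurable A) (hB : Measurable B)
    (hAfin : (Set.range A).Finite) (hBfin : (Set.range B).Finite)
    (hAB : Indep μ A B) (hAB_C : CondIndep μ A B C) :
    mutualInfo μ (fun ω => A ω + B ω) C ≤ mutualInfo μ A C + mutualInfo μ B C := by
  have hpair_fin : (Set.range fun ω => (A ω, B ω)).Finite :=
    (hAfin.prod hBfin).subset (Set.range_subset_iff.2 fun ω => ⟨⟨ω, rfl⟩, ⟨ω, rfl⟩⟩)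
  calc mutualInfo μ (fun ω => A ω + B ω) C
      = mutualInfo μ ((fun p : ℝ × ℝ => p.1 + p.2) ∘ fun ω => (A ω, B ω)) C := rfl
    _ ≤ mutualInfo μ (fun ω => (A ω, B ω)) C :=
      mutualInfo_comp_le (hA.prodMk hB) hpair_fin _ C
    _ = mutualInfo μ A C + mutualInfo μ B C :=
      mutualInfo_prod_eq_add hA hB hAfin hBfin hAB hAB_C

/-- **Mutual-information subadditivity under sums** (Equation (12) of the paper).
Let `A` and `B` be random variables taking finitely many real values and `C` a
finite-valued random variable.  If `A ⟂ B` and `A ⟂ B ∣ C`, then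
`I(A + B; C) ≤ I(A; C) + I(B; C)`. -/
theorem mi_subadditivity_under_sums
    {Ω : Type*} [MeasurableSpace Ω] (μ : Measure Ω) [IsProbabilityMeasure μ]
    {𝒞 : Type*} [Fintype 𝒞] [Nonempty 𝒞] [MeasurableSpace 𝒞] [MeasurableSingletonClass 𝒞]
    (A B : Ω → ℝ) (C : Ω → 𝒞)
    (hA : Measurable A) (hB : Measurable B) (hC : Measurable C)
    (hAfin : (Set.range A).Finite) (hBfin : (Set.range B).Finite)
    (hAB : Indep μ A B) (hAB_C : CondIndep μ A B C) :
    mutualInfo μ (fun ω => A ω + B ω) C ≤ mutualInfo μ A C + mutualInfo μ B C :=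
  mi_subadditivity_under_sums_general μ A B C hA hB hAfin hBfin hAB hAB_C
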